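/- Let n = 3l with l ≥ 1 and let (t0,t1,t2) be any triple of non-negative integers summing to n with 0 ≤ t0 ≤ t1 ≤ t2 and (t0,t1,t2) ≠ (0,0,n). Then the eigenvalue λ(t0,t1,t2) of the orthogonality graph O_{n,3} satisfies |λ(t0,t1,t2)| ≤ multinomial(n; l,l,l)/(n-1). In particular, λ(1,1,n-2) = -multinomial(n; l,l,l)/(n-1) is the smallest eigenvalue of O_{n,3}. -/

import Mathlib

open MvPolynomial

/-- The coefficient of `x^{t0} y^{t1} z^{t2}` in `(x³+y³+z³-3xyz)^l`. -/
noncomputable def coeffW (l t0 t1 t2 : ℕ) : ℤ :=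
  MvPolynomial.coeff
    (Finsupp.single (0 : Fin 3) t0 + Finsupp.single 1 t1 + Finsupp.single 2 t2)
    ((X 0 ^ 3 + X 1 ^ 3 + X 2 ^ 3 - 3 * X 0 * X 1 * X 2 : MvPolynomial (Fin 3) ℤ) ^ l)

/-- The eigenvalue of `O_{3l,3}` attached to vectors of type `(t0,t1,t2)`. -/
noncomputable def lamT (l t0 t1 t2 : ℕ) : ℚ :=
  ((Nat.multinomial Finset.univ ![l, l, l] : ℚ) /
      (Nat.multinomial Finset.univ ![t0, t1, t2] : ℚ)) * (coeffW l t0 t1 t2 : ℚ)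


/-- binomial-product form of the trinomial coefficient -/
def mn (a b c : ℕ) : ℕ := (a+b+c).choose a * ((b+c).choose b)

lemma mn_spec (a b c : ℕ) : mn a b c * (a.factorial * b.factorial * c.factorial)
    = (a+b+c).factorial := by
  have h1 : (a+b+c).choose a * a.factorial * (b+c).factorial = (a+b+c).factorial := by
    have := Nat.choose_mul_factorial_mul_factorial (Nat.le_add_right a (b+c))
    simpa [add_assoc, Nat.add_sub_cancel_left] using this
  have h2 : (b+c).choose b * b.factorial * c.factorial = (b+c).factorial := by
    have := Nat.choose_mul_factorial_mul_factorial (Nat.le_add_right b c)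
    simpa [Nat.add_sub_cancel_left] using this
  calc mn a b c * (a.factorial * b.factorial * c.factorial)
      = ((a+b+c).choose a * a.factorial) * ((b+c).choose b * b.factorial * c.factorial) := by
        unfold mn; ring
    _ = (a+b+c).factorial := by rw [h2, ← h1]

lemma mn_pos (a b c : ℕ) : 0 < mn a b c :=
  Nat.mul_pos (Nat.choose_pos (Nat.le_add_right a (b+c)|>.trans_eq (by ring)))
    (Nat.choose_pos (Nat.le_add_right b c))

lemma mn_swap01 (a b c : ℕ) : mn a b c = mn b a c := by
  have h1 := mn_spec a b c
  have h2 := mn_spec b a c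
  have e : b + a + c = a + b + c := by ring
  rw [e] at h2
  have : mn a b c * (a.factorial * b.factorial * c.factorial)
      = mn b a c * (a.factorial * b.factorial * c.factorial) := by
    rw [h1, ← h2]; ring
  exact Nat.eq_of_mul_eq_mul_right (by positivity) this

lemma mn_swap12 (a b c : ℕ) : mn a b c = mn a c b := by
  have h1 := mn_spec a b c
  have h2 := mn_spec a c b
  have e : a + c + b = a + b + c := by ring
  rw [e] at h2
  have : mn a b c * (a.factorial * b.factorial * c.factorial)
      = mn a c b * (a.factorial * b.factorial * c.factorial) := by
    rw [h1, ← h2]; ring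
  exact Nat.eq_of_mul_eq_mul_right (by positivity) this

lemma multinomial_eq_mn (a b c : ℕ) :
    Nat.multinomial Finset.univ ![a, b, c] = mn a b c := by
  have h := Nat.multinomial_spec (Finset.univ : Finset (Fin 3)) ![a,b,c]
  rw [Fin.prod_univ_three, Fin.sum_univ_three] at h
  simp only [Matrix.cons_val_zero, Matrix.cons_val_one, Matrix.head_cons,
    Matrix.cons_val_two, Matrix.tail_cons] at h
  have h2 := mn_spec a b c
  have : mn a b c * (a.factorial * b.factorial * c.factorial)
      = Nat.multinomial Finset.univ ![a,b,c] * (a.factorial * b.factorial * c.factorial) := by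
    rw [h2, ← h]; ring
  exact (Nat.eq_of_mul_eq_mul_right (by positivity) this).symm

/-- multinomial extended by zero to integer arguments -/
def MZ (x y z : ℤ) : ℕ := if 0 ≤ x ∧ 0 ≤ y ∧ 0 ≤ z then mn x.toNat y.toNat z.toNat else 0

lemma MZ_ofNat (a b c : ℕ) : MZ a b c = mn a b c := by simp [MZ]

lemma MZ_neg {x y z : ℤ} (h : x < 0 ∨ y < 0 ∨ z < 0) : MZ x y z = 0 := by
  unfold MZ; rw [if_neg]; omega

lemma MZ_swap01 (x y z : ℤ) : MZ x y z = MZ y x z := by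
  unfold MZ
  rcases Classical.em (0 ≤ x ∧ 0 ≤ y ∧ 0 ≤ z) with h|h
  · rw [if_pos h, if_pos (by omega), mn_swap01]
  · rw [if_neg h, if_neg (by omega)]

lemma MZ_swap12 (x y z : ℤ) : MZ x y z = MZ x z y := by
  unfold MZ
  rcases Classical.em (0 ≤ x ∧ 0 ≤ y ∧ 0 ≤ z) with h|h
  · rw [if_pos h, if_pos (by omega), mn_swap12]
  · rw [if_neg h, if_neg (by omega)]

/-- extended binomial coefficient -/
def CZ (x k : ℤ) : ℕ := if 0 ≤ k ∧ k ≤ x then x.toNat.choose k.toNat else 0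

lemma CZ_pascal (n k : ℤ) (hn : 0 ≤ n) : CZ (n+1) k = CZ n (k-1) + CZ n k := by
  unfold CZ
  rcases Classical.em (k ≤ 0) with hk|hk
  · rcases Classical.em (k = 0) with rfl|hk0
    · rw [if_pos (by omega), if_neg (by omega), if_pos (by omega)]
      simp
    · rw [if_neg (by omega), if_neg (by omega), if_neg (by omega)]
  · rcases Classical.em (k ≤ n) with hkn|hkn
    · rw [if_pos (by omega), if_pos (by omega), if_pos (by omega)]
      obtain ⟨a, rfl⟩ := Int.eq_ofNat_of_zero_le hn
      obtain ⟨b, rfl⟩ := Int.eq_ofNat_of_zero_le (le_of_lt (by omega : (0:ℤ) < k))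
      obtain ⟨b', rfl⟩ : ∃ b' : ℕ, b = b' + 1 := ⟨b - 1, by omega⟩
      have e1 : ((a:ℤ) + 1).toNat = a + 1 := by omega
      have e2 : (((b' + 1 : ℕ) : ℤ) - 1).toNat = b' := by push_cast; omega
      have e3 : (((b':ℕ) + 1 : ℕ) : ℤ).toNat = b' + 1 := by omega
      rw [e1, e2, e3, Int.toNat_natCast, Nat.choose_succ_succ']
    · rcases Classical.em (k ≤ n + 1) with hkn1|hkn1
      · have : k = n + 1 := by omega
        subst this
        rw [if_pos (by omega), if_pos (by omega), if_neg (by omega)]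
        have e1 : (n+1).toNat = n.toNat + 1 := by omega
        have e2 : (n+1-1).toNat = n.toNat := by omega
        rw [e1, e2] 
        simp [Nat.choose_eq_zero_of_lt (by omega : n.toNat < n.toNat + 1)]
      · rw [if_neg (by omega), if_neg (by omega), if_neg (by omega)]

lemma MZ_eq_CZ (x y z : ℤ) : MZ x y z = CZ (x+y+z) x * CZ (y+z) y := by
  unfold MZ CZ mn
  rcases Classical.em (0 ≤ x ∧ 0 ≤ y ∧ 0 ≤ z) with h|h
  · rw [if_pos h, if_pos (by omega), if_pos (by omega)]
    congr 2 <;> omega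
  · rw [if_neg h]
    rcases Classical.em (0 ≤ x ∧ x ≤ x + y + z) with h1|h1
    · rw [if_pos h1, if_neg (by omega)]
      simp
    · rw [if_neg h1]
      simp

lemma mn_a00 (a : ℕ) : mn a 0 0 = 1 := by simp [mn]

lemma MZ_a00 (x : ℤ) (hx : 0 ≤ x) : MZ x 0 0 = 1 := by
  unfold MZ
  rw [if_pos (by omega)]
  simp [mn]

/-- Pascal rule for the extended multinomial. -/
lemma MZ_pascal (x y z : ℤ) (h : 1 ≤ x + y + z) :
    MZ x y z = MZ (x-1) y z + MZ x (y-1) z + MZ x y (z-1) := by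
  rcases Classical.em (y < 0 ∨ z < 0) with hyz|hyz
  · rw [MZ_neg (by omega), MZ_neg (by omega), MZ_neg (by omega), MZ_neg (by omega)]
  · rcases Classical.em (y = 0 ∧ z = 0) with ⟨rfl, rfl⟩|hyz0
    · have r1 : MZ x ((0:ℤ)-1) 0 = 0 := MZ_neg (by omega)
      have r2 : MZ x 0 ((0:ℤ)-1) = 0 := MZ_neg (by omega)
      rw [r1, r2]
      rw [MZ_a00 _ (by omega), MZ_a00 _ (by omega)]
    · -- y + z ≥ 1
      have hyz1 : 1 ≤ y + z := by omega
      have hn : (0:ℤ) ≤ x + y + z - 1 := by omega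
      rw [MZ_eq_CZ, MZ_eq_CZ, MZ_eq_CZ, MZ_eq_CZ]
      have h1 : x + y + z = (x + y + z - 1) + 1 := by ring
      rw [h1, CZ_pascal _ _ hn]
      have h2 : y + z = (y + z - 1) + 1 := by ring
      rw [h2, CZ_pascal _ _ (by omega)]
      have e1 : x - 1 + y + z = x + y + z - 1 + 1 - 1 := by ring
      have e2 : x + (y-1) + z = x + y + z - 1 := by ring
      have e3 : x + y + (z-1) = x + y + z - 1 := by ring
      have e4 : (y-1) + z = y + z - 1 + 1 - 1 := by ring
      have e5 : y + (z-1) = y + z - 1 := by ring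
      rw [e1, e2, e3, e4, e5]
      have e6 : y + z - 1 + 1 - 1 = y + z - 1 := by ring
      rw [e6]
      ring

/-- Three-step Vandermonde expansion of the multinomial. -/
lemma MZ_vandermonde (x y z : ℤ) (h : 3 ≤ x + y + z) :
    MZ x y z = MZ (x-3) y z + MZ x (y-3) z + MZ x y (z-3)
      + 3*(MZ (x-2) (y-1) z + MZ (x-2) y (z-1) + MZ (x-1) (y-2) z + MZ x (y-2) (z-1)
        + MZ (x-1) y (z-2) + MZ x (y-1) (z-2)) + 6 * MZ (x-1) (y-1) (z-1) := by
  have p0 := MZ_pascal x y z (by omega)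
  have p1 := MZ_pascal (x-1) y z (by omega)
  have p2 := MZ_pascal x (y-1) z (by omega)
  have p3 := MZ_pascal x y (z-1) (by omega)
  have q1 := MZ_pascal (x-1-1) y z (by omega)
  have q2 := MZ_pascal (x-1) (y-1) z (by omega)
  have q3 := MZ_pascal (x-1) y (z-1) (by omega)
  have q4 := MZ_pascal x (y-1-1) z (by omega)
  have q5 := MZ_pascal x (y-1) (z-1) (by omega)
  have q6 := MZ_pascal x y (z-1-1) (by omega)
  rw [p0, p1, p2, p3, q1, q2, q3, q4, q5, q6]
  ring_nf

/-- coefficients of `(x³+y³+z³+3xyz)^l`, extended to integer exponents -/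
def AZ : ℕ → ℤ → ℤ → ℤ → ℕ
  | 0, x, y, z => if x = 0 ∧ y = 0 ∧ z = 0 then 1 else 0
  | (l+1), x, y, z => AZ l (x-3) y z + AZ l x (y-3) z + AZ l x y (z-3)
      + 3 * AZ l (x-1) (y-1) (z-1)

/-- coefficients of `(x³+y³+z³-3xyz)^l`, extended to integer exponents -/
def cWZ : ℕ → ℤ → ℤ → ℤ → ℤ
  | 0, x, y, z => if x = 0 ∧ y = 0 ∧ z = 0 then 1 else 0
  | (l+1), x, y, z => cWZ l (x-3) y z + cWZ l x (y-3) z + cWZ l x y (z-3)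
      - 3 * cWZ l (x-1) (y-1) (z-1)

def RZ (x y z : ℤ) : ℕ := MZ (x-2) (y-1) z + MZ (x-2) y (z-1) + MZ (x-1) (y-2) z
  + MZ x (y-2) (z-1) + MZ (x-1) y (z-2) + MZ x (y-1) (z-2) + MZ (x-1) (y-1) (z-1)

lemma AZ_neg : ∀ (l : ℕ) {x y z : ℤ}, (x < 0 ∨ y < 0 ∨ z < 0) → AZ l x y z = 0
  | 0, x, y, z, h => by unfold AZ; rw [if_neg (by omega)]
  | (l+1), x, y, z, h => by
      unfold AZ
      rw [AZ_neg l (by omega), AZ_neg l (by omega), AZ_neg l (by omega),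
        AZ_neg l (by omega)]

lemma cWZ_neg : ∀ (l : ℕ) {x y z : ℤ}, (x < 0 ∨ y < 0 ∨ z < 0) → cWZ l x y z = 0
  | 0, x, y, z, h => by unfold cWZ; rw [if_neg (by omega)]
  | (l+1), x, y, z, h => by
      unfold cWZ
      rw [cWZ_neg l (by omega), cWZ_neg l (by omega), cWZ_neg l (by omega),
        cWZ_neg l (by omega)]
      ring

lemma cWZ_abs_le : ∀ (l : ℕ) (x y z : ℤ), (cWZ l x y z).natAbs ≤ AZ l x y z
  | 0, x, y, z => by unfold cWZ AZ; split <;> simp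
  | (l+1), x, y, z => by
      have h1 := cWZ_abs_le l (x-3) y z
      have h2 := cWZ_abs_le l x (y-3) z
      have h3 := cWZ_abs_le l x y (z-3)
      have h4 := cWZ_abs_le l (x-1) (y-1) (z-1)
      unfold cWZ AZ
      omega

lemma AZ_swap01 : ∀ (l : ℕ) (x y z : ℤ), AZ l x y z = AZ l y x z
  | 0, x, y, z => by unfold AZ; rcases Classical.em (x = 0 ∧ y = 0 ∧ z = 0) with h|h
                     · rw [if_pos h, if_pos (by omega)]
                     · rw [if_neg h, if_neg (by omega)]
  | (l+1), x, y, z => by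
      unfold AZ
      rw [AZ_swap01 l (x-3) y z, AZ_swap01 l x (y-3) z, AZ_swap01 l x y (z-3),
        AZ_swap01 l (x-1) (y-1) (z-1)]
      ring

lemma AZ_swap12 : ∀ (l : ℕ) (x y z : ℤ), AZ l x y z = AZ l x z y
  | 0, x, y, z => by unfold AZ; rcases Classical.em (x = 0 ∧ y = 0 ∧ z = 0) with h|h
                     · rw [if_pos h, if_pos (by omega)]
                     · rw [if_neg h, if_neg (by omega)]
  | (l+1), x, y, z => by
      unfold AZ
      rw [AZ_swap12 l (x-3) y z, AZ_swap12 l x (y-3) z, AZ_swap12 l x y (z-3),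
        AZ_swap12 l (x-1) (y-1) (z-1)]
      ring

lemma RZ_swap01 (x y z : ℤ) : RZ x y z = RZ y x z := by
  unfold RZ
  rw [MZ_swap01 (x-2) (y-1) z, MZ_swap01 (x-2) y (z-1), MZ_swap01 (x-1) (y-2) z,
    MZ_swap01 x (y-2) (z-1), MZ_swap01 (x-1) y (z-2), MZ_swap01 x (y-1) (z-2),
    MZ_swap01 (x-1) (y-1) (z-1)]
  ring

lemma RZ_swap12 (x y z : ℤ) : RZ x y z = RZ x z y := by
  unfold RZ
  rw [MZ_swap12 (x-2) (y-1) z, MZ_swap12 (x-2) y (z-1), MZ_swap12 (x-1) (y-2) z,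
    MZ_swap12 x (y-2) (z-1), MZ_swap12 (x-1) y (z-2), MZ_swap12 x (y-1) (z-2),
    MZ_swap12 (x-1) (y-1) (z-1)]
  ring

lemma RZ_vandermonde (x y z : ℤ) (h : 6 ≤ x + y + z) :
    RZ x y z = RZ (x-3) y z + RZ x (y-3) z + RZ x y (z-3)
      + 3*(RZ (x-2) (y-1) z + RZ (x-2) y (z-1) + RZ (x-1) (y-2) z + RZ x (y-2) (z-1)
        + RZ (x-1) y (z-2) + RZ x (y-1) (z-2)) + 6 * RZ (x-1) (y-1) (z-1) := by
  have v1 := MZ_vandermonde (x-2) (y-1) z (by omega)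
  have v2 := MZ_vandermonde (x-2) y (z-1) (by omega)
  have v3 := MZ_vandermonde (x-1) (y-2) z (by omega)
  have v4 := MZ_vandermonde x (y-2) (z-1) (by omega)
  have v5 := MZ_vandermonde (x-1) y (z-2) (by omega)
  have v6 := MZ_vandermonde x (y-1) (z-2) (by omega)
  have v7 := MZ_vandermonde (x-1) (y-1) (z-1) (by omega)
  unfold RZ
  rw [v1, v2, v3, v4, v5, v6, v7]
  ring_nf

lemma AZ_00 : ∀ m : ℕ, AZ m 0 0 (3*m) = 1
  | 0 => by norm_num [AZ]
  | (m+1) => by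
      unfold AZ
      have h1 : AZ m ((0:ℤ)-3) 0 (3*((m+1:ℕ)):ℤ) = 0 := AZ_neg m (by norm_num)
      have h2 : AZ m 0 ((0:ℤ)-3) (3*((m+1:ℕ)):ℤ) = 0 := AZ_neg m (by norm_num)
      have h4 : AZ m ((0:ℤ)-1) ((0:ℤ)-1) ((3*((m+1:ℕ)):ℤ)-1) = 0 := AZ_neg m (by norm_num)
      have e : (3*((m+1:ℕ)):ℤ) - 3 = 3*(m:ℕ) := by push_cast; ring
      rw [h1, h2, h4, e, AZ_00 m]

lemma cWZ_00 : ∀ m : ℕ, cWZ m 0 0 (3*m) = 1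
  | 0 => by norm_num [cWZ]
  | (m+1) => by
      unfold cWZ
      have h1 : cWZ m ((0:ℤ)-3) 0 (3*((m+1:ℕ)):ℤ) = 0 := cWZ_neg m (by norm_num)
      have h2 : cWZ m 0 ((0:ℤ)-3) (3*((m+1:ℕ)):ℤ) = 0 := cWZ_neg m (by norm_num)
      have h4 : cWZ m ((0:ℤ)-1) ((0:ℤ)-1) ((3*((m+1:ℕ)):ℤ)-1) = 0 := cWZ_neg m (by norm_num)
      have e : (3*((m+1:ℕ)):ℤ) - 3 = 3*(m:ℕ) := by push_cast; ring
      rw [h1, h2, h4, e, cWZ_00 m]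
      ring

lemma AZ_11 : ∀ m : ℕ, AZ (m+1) 1 1 (3*m+1) = 3*m+3
  | 0 => by
      show AZ 0 (1-3) 1 (3*(0:ℕ)+1) + AZ 0 1 (1-3) (3*(0:ℕ)+1) + AZ 0 1 1 ((3*(0:ℕ)+1)-3)
        + 3 * AZ 0 (1-1) (1-1) ((3*(0:ℕ)+1)-1) = 3*(0:ℕ)+3
      norm_num [AZ]
  | (m+1) => by
      unfold AZ
      have h1 : AZ (m+1) ((1:ℤ)-3) 1 ((3*((m+1:ℕ)):ℤ)+1) = 0 := AZ_neg _ (by norm_num)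
      have h2 : AZ (m+1) 1 ((1:ℤ)-3) ((3*((m+1:ℕ)):ℤ)+1) = 0 := AZ_neg _ (by norm_num)
      have e3 : ((3*((m+1:ℕ)):ℤ)+1) - 3 = 3*(m:ℕ)+1 := by push_cast; ring
      have e4 : ((3*((m+1:ℕ)):ℤ)+1) - 1 = 3*((m+1:ℕ)) := by push_cast; ring
      have e5 : ((1:ℤ)-1) = 0 := by norm_num
      rw [h1, h2, e3, e4, e5, AZ_11 m, AZ_00 (m+1)]
      push_cast; ring

lemma cWZ_11 : ∀ m : ℕ, cWZ (m+1) 1 1 (3*m+1) = -(3*m+3)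
  | 0 => by
      show cWZ 0 (1-3) 1 (3*(0:ℕ)+1) + cWZ 0 1 (1-3) (3*(0:ℕ)+1) + cWZ 0 1 1 ((3*(0:ℕ)+1)-3)
        - 3 * cWZ 0 (1-1) (1-1) ((3*(0:ℕ)+1)-1) = -(3*(0:ℕ)+3)
      norm_num [cWZ]
  | (m+1) => by
      unfold cWZ
      have h1 : cWZ (m+1) ((1:ℤ)-3) 1 ((3*((m+1:ℕ)):ℤ)+1) = 0 := cWZ_neg _ (by norm_num)
      have h2 : cWZ (m+1) 1 ((1:ℤ)-3) ((3*((m+1:ℕ)):ℤ)+1) = 0 := cWZ_neg _ (by norm_num)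
      have e3 : ((3*((m+1:ℕ)):ℤ)+1) - 3 = 3*(m:ℕ)+1 := by push_cast; ring
      have e4 : ((3*((m+1:ℕ)):ℤ)+1) - 1 = 3*((m+1:ℕ)) := by push_cast; ring
      have e5 : ((1:ℤ)-1) = 0 := by norm_num
      rw [h1, h2, e3, e4, e5, cWZ_11 m, cWZ_00 (m+1)]
      push_cast; ring

lemma AZ_03 : ∀ m : ℕ, AZ (m+1) 0 3 (3*m) = m+1
  | 0 => by
      show AZ 0 (0-3) 3 (3*(0:ℕ)) + AZ 0 0 (3-3) (3*(0:ℕ)) + AZ 0 0 3 ((3*(0:ℕ))-3)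
        + 3 * AZ 0 (0-1) (3-1) ((3*(0:ℕ))-1) = (0:ℕ)+1
      norm_num [AZ]
  | (m+1) => by
      unfold AZ
      have h1 : AZ (m+1) ((0:ℤ)-3) 3 (3*((m+1:ℕ)):ℤ) = 0 := AZ_neg _ (by norm_num)
      have h4 : AZ (m+1) ((0:ℤ)-1) ((3:ℤ)-1) ((3*((m+1:ℕ)):ℤ)-1) = 0 := AZ_neg _ (by norm_num)
      have e2 : ((3:ℤ)-3) = 0 := by norm_num
      have e2b : (3*((m+1:ℕ)):ℤ) = 3*((m+1:ℕ)) := rfl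
      have e3 : (3*((m+1:ℕ)):ℤ) - 3 = 3*(m:ℕ) := by push_cast; ring
      rw [h1, h4, e2, e3, AZ_00 (m+1), AZ_03 m]
      omega

lemma mn_01c (c : ℕ) : mn 0 1 c = c + 1 := by
  simp [mn, Nat.choose_one_right, Nat.add_comm]

lemma mn_10c (c : ℕ) : mn 1 0 c = c + 1 := by
  simp [mn, Nat.choose_one_right, Nat.add_comm]

lemma mn_11c (c : ℕ) : mn 1 1 c = (c+2) * (c+1) := by
  simp [mn, Nat.choose_one_right]
  ring_nf

lemma mn_03c (c : ℕ) : mn 0 3 c = (3+c).choose 3 := by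
  simp [mn]

lemma choose_three_mul_six (n : ℕ) : n.choose 3 * 6 = n * (n-1) * (n-2) := by
  rcases Nat.lt_or_ge n 3 with h|h
  · interval_cases n <;> decide
  · obtain ⟨k, rfl⟩ : ∃ k, n = k + 3 := ⟨n - 3, by omega⟩
    have h1 := Nat.choose_mul_factorial_mul_factorial (show 3 ≤ k+3 by omega)
    have e : k + 3 - 3 = k := by omega
    rw [e] at h1
    have e2 : (k+3).factorial = ((k+3)*(k+2)*(k+1)) * k.factorial := by
      show (k+2+1).factorial = _
      rw [Nat.factorial_succ, Nat.factorial_succ, Nat.factorial_succ]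
      ring
    have e3 : (3:ℕ).factorial = 6 := rfl
    rw [e3] at h1
    have h2 : (k+3).choose 3 * 6 * k.factorial = ((k+3)*(k+2)*(k+1)) * k.factorial := by
      rw [h1, e2]
    have h3 := Nat.eq_of_mul_eq_mul_right (Nat.factorial_pos k) h2
    have e4 : k+3-1 = k+2 := by omega
    have e5 : k+3-2 = k+1 := by omega
    rw [e4, e5, h3]

lemma MZ_00c (x : ℤ) (hx : 0 ≤ x) : MZ 0 0 x = 1 := by
  unfold MZ
  rw [if_pos ⟨le_refl 0, le_refl 0, hx⟩]
  simp [mn]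

abbrev NP (x y z : ℤ) : Prop := (0 < x ∧ 0 < y) ∨ (0 < x ∧ 0 < z) ∨ (0 < y ∧ 0 < z)

theorem Qthm : ∀ m : ℕ, 2 ≤ m → ∀ x y z : ℤ, x + y + z = 3*m → NP x y z →
    AZ m x y z ≤ RZ x y z := by
  intro m hm
  induction m, hm using Nat.le_induction with
  | base =>
    have Hs : ∀ a b c : ℕ, (a:ℤ) + b + c = 6 → NP a b c → AZ 2 a b c ≤ RZ a b c := by
      intro a b c hsum hnp
      have ha : a ≤ 6 := by omega
      have hb : b ≤ 6 := by omega
      have hc : c ≤ 6 := by omega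
      interval_cases a <;> interval_cases b <;> interval_cases c <;>
        first
          | omega
          | (revert hnp; decide)
    intro x y z hsum hnp
    rcases lt_or_ge x 0 with hx|hx
    · rw [AZ_neg _ (Or.inl hx)]; exact Nat.zero_le _
    rcases lt_or_ge y 0 with hy|hy
    · rw [AZ_neg _ (Or.inr (Or.inl hy))]; exact Nat.zero_le _
    rcases lt_or_ge z 0 with hz|hz
    · rw [AZ_neg _ (Or.inr (Or.inr hz))]; exact Nat.zero_le _
    obtain ⟨a, rfl⟩ := Int.eq_ofNat_of_zero_le hx
    obtain ⟨b, rfl⟩ := Int.eq_ofNat_of_zero_le hy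
    obtain ⟨c, rfl⟩ := Int.eq_ofNat_of_zero_le hz
    exact Hs a b c (by exact_mod_cast hsum) hnp
  | succ m hm IH =>
    have Hs : ∀ x y z : ℤ, x ≤ y → y ≤ z → x + y + z = 3*(m+1) → NP x y z →
        AZ (m+1) x y z ≤ RZ x y z := by
      intro x y z hxy hyz hsum hnp
      rcases lt_or_ge x 0 with hx|hx
      · rw [AZ_neg _ (Or.inl hx)]; exact Nat.zero_le _
      have hy1 : 1 ≤ y := by omega
      have hz1 : 1 ≤ z := by omega
      by_cases hc1 : x = 1 ∧ y = 1
      · obtain ⟨rfl, rfl⟩ := hc1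
        have hz : z = 3*(m:ℤ)+1 := by push_cast at hsum ⊢; omega
        subst hz
        have hA := AZ_11 m
        have t5 : MZ ((1:ℤ)-1) 1 (3*(m:ℤ)+1-2) = 3*m := by
          rw [show ((1:ℤ)-1) = ((0:ℕ):ℤ) by norm_num,
            show (3*(m:ℤ)+1-2) = ((3*m-1 : ℕ):ℤ) by push_cast; omega,
            show (1:ℤ) = ((1:ℕ):ℤ) by norm_num, MZ_ofNat, mn_01c]
          omega
        have t6 : MZ 1 ((1:ℤ)-1) (3*(m:ℤ)+1-2) = 3*m := by
          rw [show ((1:ℤ)-1) = ((0:ℕ):ℤ) by norm_num,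
            show (3*(m:ℤ)+1-2) = ((3*m-1 : ℕ):ℤ) by push_cast; omega,
            show (1:ℤ) = ((1:ℕ):ℤ) by norm_num, MZ_ofNat, mn_10c]
          omega
        have t7 : MZ ((1:ℤ)-1) ((1:ℤ)-1) (3*(m:ℤ)+1-1) = 1 := by
          rw [show ((1:ℤ)-1) = (0:ℤ) by norm_num]
          exact MZ_00c _ (by omega)
        unfold RZ
        omega
      by_cases hc2 : x = 0 ∧ y = 3
      · obtain ⟨rfl, rfl⟩ := hc2
        have hz : z = 3*(m:ℤ) := by push_cast at hsum ⊢; omega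
        subst hz
        have hA := AZ_03 m
        have t4 : MZ 0 ((3:ℤ)-2) (3*(m:ℤ)-1) = 3*m := by
          rw [show ((3:ℤ)-2) = ((1:ℕ):ℤ) by norm_num,
            show (3*(m:ℤ)-1) = ((3*m-1 : ℕ):ℤ) by push_cast; omega,
            show (0:ℤ) = ((0:ℕ):ℤ) by norm_num, MZ_ofNat, mn_01c]
          omega
        unfold RZ
        omega
      -- generic case
      have hb0 : AZ m (x-3) y z ≤ RZ (x-3) y z := by
        rcases lt_or_ge (x-3) 0 with h|h
        · rw [AZ_neg _ (Or.inl h)]; exact Nat.zero_le _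
        · exact IH (x-3) y z (by push_cast at hsum ⊢; omega) (by omega)
      have hb1 : AZ m x (y-3) z ≤ RZ x (y-3) z := by
        rcases lt_or_ge (y-3) 0 with h|h
        · rw [AZ_neg _ (Or.inr (Or.inl h))]; exact Nat.zero_le _
        · exact IH x (y-3) z (by push_cast at hsum ⊢; omega) (by omega)
      have hb2 : AZ m x y (z-3) ≤ RZ x y (z-3) := by
        rcases lt_or_ge (z-3) 0 with h|h
        · rw [AZ_neg _ (Or.inr (Or.inr h))]; exact Nat.zero_le _
        · refine IH x y (z-3) (by push_cast at hsum ⊢; omega) ?_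
          push_cast at hsum
          omega
      have hb3 : AZ m (x-1) (y-1) (z-1) ≤ RZ (x-1) (y-1) (z-1) := by
        rcases lt_or_ge (x-1) 0 with h|h
        · rw [AZ_neg _ (Or.inl h)]; exact Nat.zero_le _
        · exact IH (x-1) (y-1) (z-1) (by push_cast at hsum ⊢; omega) (by omega)
      have vdm := RZ_vandermonde x y z (by push_cast at hsum ⊢; omega)
      have hrec : AZ (m+1) x y z = AZ m (x-3) y z + AZ m x (y-3) z + AZ m x y (z-3)
          + 3*AZ m (x-1) (y-1) (z-1) := rfl
      omega
    intro x y z hsum hnp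
    rcases le_total x y with h1|h1 <;> rcases le_total y z with h2|h2 <;>
      rcases le_total x z with h3|h3
    · exact Hs x y z h1 h2 hsum hnp
    · exact Hs x y z h1 h2 hsum hnp
    · rw [AZ_swap12, RZ_swap12]
      exact Hs x z y h3 h2 (by omega) (by omega)
    · rw [AZ_swap12, AZ_swap01, RZ_swap12, RZ_swap01]
      exact Hs z x y h3 h1 (by omega) (by omega)
    · rw [AZ_swap01, RZ_swap01]
      exact Hs y x z h1 h3 (by omega) (by omega)
    · rw [AZ_swap01, AZ_swap12, RZ_swap01, RZ_swap12]
      exact Hs y z x h2 h3 (by omega) (by omega)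
    · rw [AZ_swap01, RZ_swap01]
      exact Hs y x z h1 h3 (by omega) (by omega)
    · rw [AZ_swap12, AZ_swap01, AZ_swap12, RZ_swap12, RZ_swap01, RZ_swap12]
      exact Hs z y x h2 h1 (by omega) (by omega)

theorem Pthm : ∀ l : ℕ, 1 ≤ l → ∀ x y z : ℤ, x + y + z = 3*l → NP x y z →
    (3*l-1) * AZ l x y z ≤ MZ x y z := by
  intro l hl
  induction l, hl using Nat.le_induction with
  | base =>
    have Hs : ∀ a b c : ℕ, (a:ℤ) + b + c = 3 → NP a b c →
        (3*1-1) * AZ 1 a b c ≤ MZ a b c := by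
      intro a b c hsum hnp
      have ha : a ≤ 3 := by omega
      have hb : b ≤ 3 := by omega
      have hc : c ≤ 3 := by omega
      interval_cases a <;> interval_cases b <;> interval_cases c <;>
        first
          | omega
          | (revert hnp; decide)
    intro x y z hsum hnp
    rcases lt_or_ge x 0 with hx|hx
    · rw [AZ_neg _ (Or.inl hx)]; simp
    rcases lt_or_ge y 0 with hy|hy
    · rw [AZ_neg _ (Or.inr (Or.inl hy))]; simp
    rcases lt_or_ge z 0 with hz|hz
    · rw [AZ_neg _ (Or.inr (Or.inr hz))]; simp
    obtain ⟨a, rfl⟩ := Int.eq_ofNat_of_zero_le hx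
    obtain ⟨b, rfl⟩ := Int.eq_ofNat_of_zero_le hy
    obtain ⟨c, rfl⟩ := Int.eq_ofNat_of_zero_le hz
    exact Hs a b c (by exact_mod_cast hsum) hnp
  | succ m hm IH =>
    have Hs : ∀ x y z : ℤ, x ≤ y → y ≤ z → x + y + z = 3*(m+1) → NP x y z →
        (3*(m+1)-1) * AZ (m+1) x y z ≤ MZ x y z := by
      intro x y z hxy hyz hsum hnp
      rcases lt_or_ge x 0 with hx|hx
      · rw [AZ_neg _ (Or.inl hx)]; simp
      have hy1 : 1 ≤ y := by omega
      have hz1 : 1 ≤ z := by omega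
      by_cases hc1 : x = 1 ∧ y = 1
      · obtain ⟨rfl, rfl⟩ := hc1
        have hz : z = 3*(m:ℤ)+1 := by omega
        subst hz
        rw [AZ_11 m]
        have tM : MZ 1 1 (3*(m:ℤ)+1) = (3*m+3)*(3*m+2) := by
          rw [show (3*(m:ℤ)+1) = ((3*m+1 : ℕ):ℤ) by push_cast; ring,
            show (1:ℤ) = ((1:ℕ):ℤ) by norm_num, MZ_ofNat, mn_11c]
        rw [tM, show 3*(m+1)-1 = 3*m+2 by omega, Nat.mul_comm]
      by_cases hc2 : x = 0 ∧ y = 3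
      · obtain ⟨rfl, rfl⟩ := hc2
        have hz : z = 3*(m:ℤ) := by omega
        subst hz
        rw [AZ_03 m]
        have tM : MZ 0 3 (3*(m:ℤ)) = (3*m+3).choose 3 := by
          rw [show (3*(m:ℤ)) = ((3*m : ℕ):ℤ) by push_cast; ring,
            show (0:ℤ) = ((0:ℕ):ℤ) by norm_num, show (3:ℤ) = ((3:ℕ):ℤ) by norm_num,
            MZ_ofNat, mn_03c]
          congr 1
          omega
        rw [tM, show 3*(m+1)-1 = 3*m+2 by omega]
        have h6 := choose_three_mul_six (3*m+3)
        have e4 : 3*m+3-1 = 3*m+2 := by omega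
        have e5 : 3*m+3-2 = 3*m+1 := by omega
        rw [e4, e5] at h6
        have key : ((3*m+2) * (m+1)) * 6 ≤ ((3*m+3).choose 3) * 6 := by
          rw [h6]
          nlinarith [hm]
        exact Nat.le_of_mul_le_mul_right key (by norm_num)
      -- generic case
      have hQ : AZ (m+1) x y z ≤ RZ x y z := Qthm (m+1) (by omega) x y z hsum hnp
      have hb0 : (3*m-1) * AZ m (x-3) y z ≤ MZ (x-3) y z := by
        rcases lt_or_ge (x-3) 0 with h|h
        · rw [AZ_neg _ (Or.inl h)]; simp
        · exact IH (x-3) y z (by omega) (by omega)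
      have hb1 : (3*m-1) * AZ m x (y-3) z ≤ MZ x (y-3) z := by
        rcases lt_or_ge (y-3) 0 with h|h
        · rw [AZ_neg _ (Or.inr (Or.inl h))]; simp
        · exact IH x (y-3) z (by omega) (by omega)
      have hb2 : (3*m-1) * AZ m x y (z-3) ≤ MZ x y (z-3) := by
        rcases lt_or_ge (z-3) 0 with h|h
        · rw [AZ_neg _ (Or.inr (Or.inr h))]; simp
        · exact IH x y (z-3) (by omega) (by omega)
      have hb3 : (3*m-1) * AZ m (x-1) (y-1) (z-1) ≤ MZ (x-1) (y-1) (z-1) := by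
        rcases lt_or_ge (x-1) 0 with h|h
        · rw [AZ_neg _ (Or.inl h)]; simp
        · exact IH (x-1) (y-1) (z-1) (by omega) (by omega)
      have vdm := MZ_vandermonde x y z (by omega)
      have hrec : AZ (m+1) x y z = AZ m (x-3) y z + AZ m x (y-3) z + AZ m x y (z-3)
          + 3*AZ m (x-1) (y-1) (z-1) := rfl
      have hRZ : RZ x y z = MZ (x-2) (y-1) z + MZ (x-2) y (z-1) + MZ (x-1) (y-2) z
          + MZ x (y-2) (z-1) + MZ (x-1) y (z-2) + MZ x (y-1) (z-2)
          + MZ (x-1) (y-1) (z-1) := rfl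
      have e1 : (3*(m+1)-1) * AZ (m+1) x y z
          = ((3*m-1) * AZ m (x-3) y z + (3*m-1) * AZ m x (y-3) z
            + (3*m-1) * AZ m x y (z-3) + 3*((3*m-1) * AZ m (x-1) (y-1) (z-1)))
            + 3 * AZ (m+1) x y z := by
        rw [show 3*(m+1)-1 = (3*m-1)+3 by omega]
        conv_lhs => rw [hrec]
        rw [hrec]
        ring
      rw [e1, vdm]
      rw [hRZ] at hQ
      linarith [hb0, hb1, hb2, hb3, hQ]
    intro x y z hsum hnp
    rcases le_total x y with h1|h1 <;> rcases le_total y z with h2|h2 <;>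
      rcases le_total x z with h3|h3
    · exact Hs x y z h1 h2 hsum hnp
    · exact Hs x y z h1 h2 hsum hnp
    · rw [AZ_swap12, MZ_swap12]
      exact Hs x z y h3 h2 (by omega) (by omega)
    · rw [AZ_swap12, AZ_swap01, MZ_swap12, MZ_swap01]
      exact Hs z x y h3 h1 (by omega) (by omega)
    · rw [AZ_swap01, MZ_swap01]
      exact Hs y x z h1 h3 (by omega) (by omega)
    · rw [AZ_swap01, AZ_swap12, MZ_swap01, MZ_swap12]
      exact Hs y z x h2 h3 (by omega) (by omega)
    · rw [AZ_swap01, MZ_swap01]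
      exact Hs y x z h1 h3 (by omega) (by omega)
    · rw [AZ_swap12, AZ_swap01, AZ_swap12, MZ_swap12, MZ_swap01, MZ_swap12]
      exact Hs z y x h2 h1 (by omega) (by omega)

noncomputable def fs (a b c : ℕ) : Fin 3 →₀ ℕ :=
  Finsupp.single 0 a + Finsupp.single 1 b + Finsupp.single 2 c

lemma fs_apply0 (a b c : ℕ) : fs a b c 0 = a := by
  simp [fs, Finsupp.single_apply]
lemma fs_apply1 (a b c : ℕ) : fs a b c 1 = b := by
  simp [fs, Finsupp.single_apply]
lemma fs_apply2 (a b c : ℕ) : fs a b c 2 = c := by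
  simp [fs, Finsupp.single_apply]

lemma fs_eq_zero_iff (a b c : ℕ) : (0 : Fin 3 →₀ ℕ) = fs a b c ↔ a = 0 ∧ b = 0 ∧ c = 0 := by
  constructor
  · intro h
    refine ⟨?_, ?_, ?_⟩
    · have := congrArg (fun f : Fin 3 →₀ ℕ => f 0) h
      simpa [fs_apply0] using this.symm
    · have := congrArg (fun f : Fin 3 →₀ ℕ => f 1) h
      simpa [fs_apply1] using this.symm
    · have := congrArg (fun f : Fin 3 →₀ ℕ => f 2) h
      simpa [fs_apply2] using this.symm
  · rintro ⟨rfl, rfl, rfl⟩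
    ext i
    fin_cases i <;> simp [fs_apply0, fs_apply1, fs_apply2]

lemma fs_le_iff (a b c a' b' c' : ℕ) : fs a b c ≤ fs a' b' c' ↔ a ≤ a' ∧ b ≤ b' ∧ c ≤ c' := by
  rw [Finsupp.le_def]
  constructor
  · intro h
    exact ⟨by simpa [fs_apply0] using h 0, by simpa [fs_apply1] using h 1,
      by simpa [fs_apply2] using h 2⟩
  · rintro ⟨h1, h2, h3⟩ i
    fin_cases i <;> simp [fs_apply0, fs_apply1, fs_apply2, h1, h2, h3]

lemma fs_sub (a b c a' b' c' : ℕ) : fs a b c - fs a' b' c' = fs (a-a') (b-b') (c-c') := by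
  ext i
  fin_cases i <;>
    simp [Finsupp.tsub_apply, fs_apply0, fs_apply1, fs_apply2]

noncomputable def Wpoly : MvPolynomial (Fin 3) ℤ :=
  X 0 ^ 3 + X 1 ^ 3 + X 2 ^ 3 - 3 * X 0 * X 1 * X 2

lemma W_decomp : Wpoly = monomial (fs 3 0 0) 1 + monomial (fs 0 3 0) 1
    + monomial (fs 0 0 3) 1 + monomial (fs 1 1 1) (-3) := by
  have s0 : Finsupp.single (0 : Fin 3) 3 = fs 3 0 0 := by
    ext i; fin_cases i <;> simp [fs, Finsupp.single_apply]
  have s1 : Finsupp.single (1 : Fin 3) 3 = fs 0 3 0 := by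
    ext i; fin_cases i <;> simp [fs, Finsupp.single_apply]
  have s2 : Finsupp.single (2 : Fin 3) 3 = fs 0 0 3 := by
    ext i; fin_cases i <;> simp [fs, Finsupp.single_apply]
  have h3 : (3 * X 0 * X 1 * X 2 : MvPolynomial (Fin 3) ℤ) = monomial (fs 1 1 1) 3 := by
    have e0 : (X 0 : MvPolynomial (Fin 3) ℤ) = monomial (Finsupp.single 0 1) 1 := by
      rw [← X_pow_eq_monomial, pow_one]
    have e1 : (X 1 : MvPolynomial (Fin 3) ℤ) = monomial (Finsupp.single 1 1) 1 := by
      rw [← X_pow_eq_monomial, pow_one]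
    have e2 : (X 2 : MvPolynomial (Fin 3) ℤ) = monomial (Finsupp.single 2 1) 1 := by
      rw [← X_pow_eq_monomial, pow_one]
    have e3 : (3 : MvPolynomial (Fin 3) ℤ) = monomial 0 3 := by
      rw [← C_apply]; rfl
    rw [e0, e1, e2, e3, monomial_mul, monomial_mul, monomial_mul]
    have efs : (0 : Fin 3 →₀ ℕ) + Finsupp.single 0 1 + Finsupp.single 1 1
        + Finsupp.single 2 1 = fs 1 1 1 := by
      ext i; fin_cases i <;> simp [fs, Finsupp.single_apply]
    rw [efs]
    norm_num
  have hneg : (monomial (fs 1 1 1) (-3 : ℤ)) = -(monomial (fs 1 1 1) (3:ℤ)) :=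
    map_neg (monomial (fs 1 1 1)) 3
  unfold Wpoly
  rw [X_pow_eq_monomial, X_pow_eq_monomial, X_pow_eq_monomial, s0, s1, s2, h3, hneg]
  ring

lemma coeff_mul_W (p : MvPolynomial (Fin 3) ℤ) (a b c : ℕ) :
    MvPolynomial.coeff (fs a b c) (p * Wpoly)
      = (if 3 ≤ a then MvPolynomial.coeff (fs (a-3) b c) p else 0)
      + (if 3 ≤ b then MvPolynomial.coeff (fs a (b-3) c) p else 0)
      + (if 3 ≤ c then MvPolynomial.coeff (fs a b (c-3)) p else 0)
      + (-3) * (if 1 ≤ a ∧ 1 ≤ b ∧ 1 ≤ c then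
          MvPolynomial.coeff (fs (a-1) (b-1) (c-1)) p else 0) := by
  rw [W_decomp, mul_add, mul_add, mul_add, MvPolynomial.coeff_add, MvPolynomial.coeff_add,
    MvPolynomial.coeff_add, coeff_mul_monomial', coeff_mul_monomial',
    coeff_mul_monomial', coeff_mul_monomial']
  simp only [fs_le_iff, fs_sub]
  have g1 : (3 ≤ a ∧ 0 ≤ b ∧ 0 ≤ c) ↔ 3 ≤ a := by omega
  have g2 : (0 ≤ a ∧ 3 ≤ b ∧ 0 ≤ c) ↔ 3 ≤ b := by omega
  have g3 : (0 ≤ a ∧ 0 ≤ b ∧ 3 ≤ c) ↔ 3 ≤ c := by omega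
  simp only [g1, g2, g3, Nat.sub_zero, mul_one]
  split_ifs <;> ring

lemma coeff_W_pow : ∀ (l : ℕ) (a b c : ℕ),
    MvPolynomial.coeff (fs a b c) (Wpoly ^ l) = cWZ l a b c := by
  intro l
  induction l with
  | zero =>
    intro a b c
    rw [pow_zero]
    unfold cWZ
    rw [MvPolynomial.coeff_one]
    by_cases h : a = 0 ∧ b = 0 ∧ c = 0
    · rw [if_pos ((fs_eq_zero_iff a b c).mpr h), if_pos (by exact_mod_cast h)]
    · rw [if_neg (fun hh => h ((fs_eq_zero_iff a b c).mp hh)),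
        if_neg (fun hh => h (by exact_mod_cast hh))]
  | succ l IH =>
    intro a b c
    rw [pow_succ, coeff_mul_W]
    show _ = cWZ (l+1) a b c
    unfold cWZ
    have h1 : (if 3 ≤ a then MvPolynomial.coeff (fs (a-3) b c) (Wpoly ^ l) else 0)
        = cWZ l ((a:ℤ)-3) b c := by
      split_ifs with h
      · rw [IH]
        congr 1
        omega
      · rw [cWZ_neg l (by omega)]
    have h2 : (if 3 ≤ b then MvPolynomial.coeff (fs a (b-3) c) (Wpoly ^ l) else 0)
        = cWZ l a ((b:ℤ)-3) c := by
      split_ifs with h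
      · rw [IH]
        congr 1
        omega
      · rw [cWZ_neg l (by omega)]
    have h3 : (if 3 ≤ c then MvPolynomial.coeff (fs a b (c-3)) (Wpoly ^ l) else 0)
        = cWZ l a b ((c:ℤ)-3) := by
      split_ifs with h
      · rw [IH]
        congr 1
        omega
      · rw [cWZ_neg l (by omega)]
    have h4 : (if 1 ≤ a ∧ 1 ≤ b ∧ 1 ≤ c then
          MvPolynomial.coeff (fs (a-1) (b-1) (c-1)) (Wpoly ^ l) else 0)
        = cWZ l ((a:ℤ)-1) ((b:ℤ)-1) ((c:ℤ)-1) := by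
      split_ifs with h
      · rw [IH]
        congr 1 <;> omega
      · rw [cWZ_neg l (by omega)]
    rw [h1, h2, h3, h4]
    ring

lemma coeffW_eq_cWZ (l a b c : ℕ) : coeffW l a b c = cWZ l a b c := by
  have : coeffW l a b c = MvPolynomial.coeff (fs a b c) (Wpoly ^ l) := rfl
  rw [this, coeff_W_pow]

theorem stmt9 (l n : ℕ) (hl : 1 ≤ l) (hn : n = 3 * l) :
    (∀ t0 t1 t2 : ℕ, t0 + t1 + t2 = n → t0 ≤ t1 → t1 ≤ t2 →
      (t0, t1, t2) ≠ (0, 0, n) →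
      |lamT l t0 t1 t2| ≤ (Nat.multinomial Finset.univ ![l, l, l] : ℚ) / ((n : ℚ) - 1)) ∧
    lamT l 1 1 (n - 2)
      = -((Nat.multinomial Finset.univ ![l, l, l] : ℚ) / ((n : ℚ) - 1)) := by
  subst hn
  have hn3 : 3 ≤ 3 * l := by omega
  have hq : (0:ℚ) < (3*l : ℕ) - 1 := by
    have : (3:ℚ) ≤ (3*l : ℕ) := by exact_mod_cast hn3
    linarith
  constructor
  · intro t0 t1 t2 hsum hle01 hle12 hne
    have ht1 : 1 ≤ t1 ∧ 1 ≤ t2 := by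
      by_contra hcon
      apply hne
      have : t1 = 0 ∨ t2 = 0 := by omega
      have h0 : t0 = 0 ∧ t1 = 0 := by omega
      simp [Prod.ext_iff, h0.1, h0.2]
      omega
    -- core bound on the integer coefficient
    have hP := Pthm l hl t0 t1 t2 (by push_cast; omega)
      (Or.inr (Or.inr ⟨by exact_mod_cast ht1.1, by exact_mod_cast ht1.2⟩))
    have hAb := cWZ_abs_le l t0 t1 t2
    have hMZ : MZ t0 t1 t2 = mn t0 t1 t2 := MZ_ofNat t0 t1 t2
    have hkey : (3*l - 1) * (cWZ l t0 t1 t2).natAbs ≤ mn t0 t1 t2 := by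
      calc (3*l - 1) * (cWZ l t0 t1 t2).natAbs
          ≤ (3*l - 1) * AZ l t0 t1 t2 := Nat.mul_le_mul_left _ hAb
        _ ≤ MZ t0 t1 t2 := hP
        _ = mn t0 t1 t2 := hMZ
    have hMt : Nat.multinomial Finset.univ ![t0, t1, t2] = mn t0 t1 t2 :=
      multinomial_eq_mn t0 t1 t2
    have hMtpos : (0:ℚ) < (Nat.multinomial Finset.univ ![t0, t1, t2] : ℚ) := by
      rw [hMt]
      exact_mod_cast mn_pos t0 t1 t2
    have hMlll : (0:ℚ) ≤ (Nat.multinomial Finset.univ ![l, l, l] : ℚ) := by positivity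
    rw [lamT, coeffW_eq_cWZ, abs_mul, abs_div]
    rw [abs_of_nonneg hMlll, abs_of_nonneg hMtpos.le]
    rw [← Int.cast_abs, Int.abs_eq_natAbs]
    set M : ℚ := (Nat.multinomial Finset.univ ![l, l, l] : ℚ)
    set Mt : ℚ := (Nat.multinomial Finset.univ ![t0, t1, t2] : ℚ)
    set B : ℚ := ((cWZ l t0 t1 t2).natAbs : ℚ)
    have hB0 : (0:ℚ) ≤ B := by positivity
    rw [div_mul_eq_mul_div, div_le_div_iff₀ hMtpos hq]
    -- goal : M * B * ((3*l:ℕ) - 1) ≤ M / ?  * ...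
    have hcast : ((3*l : ℕ) : ℚ) - 1 = ((3*l - 1 : ℕ) : ℚ) := by
      push_cast [Nat.cast_sub (by omega : 1 ≤ 3*l)]
      ring
    rw [hcast]
    have hℕ : Nat.multinomial Finset.univ ![l,l,l] * ((3*l-1) * (cWZ l t0 t1 t2).natAbs)
        ≤ Nat.multinomial Finset.univ ![l,l,l] * Nat.multinomial Finset.univ ![t0,t1,t2] := by
      rw [hMt]
      exact Nat.mul_le_mul_left _ hkey
    calc M * B * ((3*l-1 : ℕ) : ℚ)
        = (↑(Nat.multinomial Finset.univ ![l,l,l] * ((3*l-1) * (cWZ l t0 t1 t2).natAbs)) : ℚ) := by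
          push_cast [M, B]
          ring
      _ ≤ (↑(Nat.multinomial Finset.univ ![l,l,l] * Nat.multinomial Finset.univ ![t0,t1,t2]) : ℚ) := by
          exact_mod_cast hℕ
      _ = M * Mt := by push_cast [M, Mt]; ring
  · -- the eigenvalue at (1,1,n-2)
    obtain ⟨m, rfl⟩ : ∃ m, l = m + 1 := ⟨l - 1, by omega⟩
    have e2 : 3 * (m+1) - 2 = 3*m + 1 := by omega
    have hcW : coeffW (m+1) 1 1 (3*(m+1) - 2) = -(3*(m:ℤ)+3) := by
      rw [coeffW_eq_cWZ, e2]
      have ecast : ((3*m+1 : ℕ) : ℤ) = 3*(m:ℤ)+1 := by push_cast; ring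
      rw [show ((1:ℕ):ℤ) = (1:ℤ) from rfl, ecast, cWZ_11 m]
    have hM11 : Nat.multinomial Finset.univ ![1, 1, 3*(m+1)-2] = (3*m+3) * (3*m+2) := by
      rw [multinomial_eq_mn, e2, mn_11c]
    rw [lamT, hcW, hM11]
    have h32 : ((3*(m+1)*1 : ℕ) : ℚ) = 3*(m:ℚ)+3 := by push_cast; ring
    have hc1 : ((3*(m+1) : ℕ) : ℚ) = 3*(m:ℚ)+3 := by push_cast; ring
    rw [hc1]
    have hA : ((3*m+3) * (3*m+2) : ℕ) = ((3*m+3 : ℕ) : ℚ) * ((3*m+2 : ℕ):ℚ) := by push_cast; ring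
    push_cast
    have d1 : (3*(m:ℚ)+3) * (3*(m:ℚ)+2) ≠ 0 := by positivity
    have d2 : (3*(m:ℚ)+3) - 1 ≠ 0 := by
      have : (0:ℚ) ≤ (m:ℚ) := by positivity
      intro h; nlinarith
    have d3 : (3*(m:ℚ)+2) ≠ 0 := by positivity
    have d4 : 3 * ((m:ℚ) + 1) - 1 ≠ 0 := by
      have : (0:ℚ) ≤ (m:ℚ) := by positivity
      intro h; nlinarith
    field_simp
    ring
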